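/- Let 1 ≤ p₁, p₂ < ∞ and 0 < r ≤ 1, and let σ : 𝕋ⁿ × ℤⁿ → ℂ be such that x ↦ σ(x,k) is measurable for every k ∈ ℤⁿ and there exist constants C > 0 and s > n with |σ(x,k)| ≤ C ⟨k⟩^{−s/r} for all x ∈ 𝕋ⁿ and k ∈ ℤⁿ. Then the operator A = Op(σ) with symbol σ is a well-defined bounded linear operator from L^{p₁}(μ) to L^{p₂}(μ) and is r-nuclear. -/

import Mathlib

/-!
The coefficient functionals `f ↦ f̂(k)` have norm at most `1` on `L^{p₁}` of the torus, and
`σ(·,k) e_k` has `L^{p₂}`-norm at most `C ⟨k⟩^{-s/r}`, because `μ` is a probability measure and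
`|e_k| = 1`. Hence `Op(σ) = ∑ₖ f̂(k) σ(·,k) e_k` is an `r`-nuclear decomposition as soon as
`∑ₖ ⟨k⟩^{-s} < ∞`, which holds for `s > n` since `⟨k⟩^{2n} ≥ ∏ᵢ (1 + 4π² kᵢ²)` reduces it to
a product of one-dimensional `p`-series; for `r ≤ 1` the same bound makes the series for
`Op(σ)` converge absolutely, so the operator exists.
-/

open MeasureTheory ENNReal NNReal Real

noncomputable section

/-- For `0 < r ≤ 1`, a bounded linear operator `T : E → F` between complex Banach spaces is
`r`-nuclear if there are sequences `(x'_m)` of continuous functionals on `E` and `(y_m)` in `F`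
with `T v = ∑ₘ x'_m(v) • y_m` for all `v` and `∑ₘ ‖x'_m‖^r ‖y_m‖^r < ∞`. -/
def IsRNuclear {E F : Type*} [NormedAddCommGroup E] [NormedSpace ℂ E]
    [NormedAddCommGroup F] [NormedSpace ℂ F] (r : ℝ) (T : E →L[ℂ] F) : Prop :=
  ∃ (x' : ℕ → (E →L[ℂ] ℂ)) (y : ℕ → F),
    (∀ v : E, HasSum (fun m => x' m v • y m) (T v)) ∧
    Summable (fun m => ‖x' m‖ ^ r * ‖y m‖ ^ r)

/-- The `n`-torus `𝕋ⁿ = (ℝ/ℤ)ⁿ`; its `volume` measure is the product of the normalized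
Haar measures of the circle factors, a probability measure. -/
abbrev Torus (n : ℕ) := Fin n → AddCircle (1 : ℝ)

/-- The character `e_k(x) = ∏ i, exp(2πi k_i x_i)` on the `n`-torus. -/
noncomputable def eK {n : ℕ} (k : Fin n → ℤ) (x : Torus n) : ℂ :=
  ∏ i, (fourier (k i) : C(AddCircle (1 : ℝ), ℂ)) (x i)

/-- The `k`-th Fourier coefficient `f̂(k) = ∫ f conj(e_k) dμ` of `f : 𝕋ⁿ → ℂ`. -/
noncomputable def fourierCoeffT {n : ℕ} (f : Torus n → ℂ) (k : Fin n → ℤ) : ℂ :=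
  ∫ x, f x * (starRingEnd ℂ) (eK k x)

/-- `A` is the operator `Op(σ)` with symbol `σ`: `A f = ∑_k f̂(k) • (σ(·,k) e_k)`,
the series converging in `L^{p₂}(μ)`. -/
def IsOp {n : ℕ} {p₁ p₂ : ℝ≥0∞} [Fact (1 ≤ p₁)] [Fact (1 ≤ p₂)]
    (σ : Torus n → (Fin n → ℤ) → ℂ)
    (A : Lp ℂ p₁ (volume : Measure (Torus n)) →L[ℂ] Lp ℂ p₂ (volume : Measure (Torus n))) :
    Prop :=
  ∃ F : (Fin n → ℤ) → Lp ℂ p₂ (volume : Measure (Torus n)),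
    (∀ k, ⇑(F k) =ᵐ[volume] fun x => σ x k * eK k x) ∧
    ∀ f : Lp ℂ p₁ (volume : Measure (Torus n)),
      HasSum (fun k => fourierCoeffT (⇑f) k • F k) (A f)

/-- The weight `⟨k⟩ = (1 + 4π² ∑ᵢ kᵢ²)^{1/2}` on `ℤⁿ`. -/
noncomputable def jpW {n : ℕ} (k : Fin n → ℤ) : ℝ :=
  (1 + 4 * π ^ 2 * ∑ i, ((k i : ℝ)) ^ 2) ^ ((1 : ℝ) / 2)

instance : IsProbabilityMeasure (volume : Measure (AddCircle (1 : ℝ))) :=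
  ⟨by simp [AddCircle.measure_univ]⟩

lemma summable_int_one_add_mul_sq_rpow_neg {c : ℝ} (hc : 0 < c) {t : ℝ} (ht : 1 / 2 < t) :
    Summable fun m : ℤ => (1 + c * (m : ℝ) ^ 2) ^ (-t) := by
  refine Summable.of_norm_bounded_eventually
    ((summable_abs_int_rpow (b := 2 * t) (by linarith)).mul_left (c ^ (-t))) ?_
  refine (Set.finite_singleton (0 : ℤ)).subset fun m hm => Set.mem_singleton_iff.mpr ?_
  by_contra hm0
  have hm2 : 0 < (m : ℝ) ^ 2 := by positivity
  refine hm ?_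
  calc ‖(1 + c * (m : ℝ) ^ 2) ^ (-t)‖ = (1 + c * (m : ℝ) ^ 2) ^ (-t) :=
        Real.norm_of_nonneg (by positivity)
    _ ≤ (c * (m : ℝ) ^ 2) ^ (-t) :=
        Real.rpow_le_rpow_of_nonpos (by positivity) (by linarith) (by linarith)
    _ = c ^ (-t) * |(m : ℝ)| ^ (-(2 * t)) := by
        rw [Real.mul_rpow hc.le hm2.le, ← sq_abs, ← Real.rpow_natCast,
          ← Real.rpow_mul (abs_nonneg _)]
        push_cast
        ring_nf

lemma summable_pi_prod_of_nonneg {ι : Type*} {g : ι → ℝ} (hg : Summable g) (hg0 : 0 ≤ g) :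
    ∀ n : ℕ, Summable fun k : Fin n → ι => ∏ i, g (k i)
  | 0 => .of_finite
  | n + 1 => by
    have := (hg.mul_of_nonneg (summable_pi_prod_of_nonneg hg hg0 n) hg0
      fun k => Finset.prod_nonneg fun i _ => hg0 (k i))
    refine ((Fin.consEquiv fun _ => ι).symm.summable_iff.mpr this).congr fun k => ?_
    simp [Fin.prod_univ_succ, Fin.tail]

lemma jpW_rpow_neg_le_prod {n : ℕ} (hn : n ≠ 0) {s : ℝ} (hs : 0 ≤ s) (k : Fin n → ℤ) :
    jpW k ^ (-s) ≤ ∏ i, (1 + 4 * π ^ 2 * (k i : ℝ) ^ 2) ^ (-(s / (2 * n))) := by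
  set W := 1 + 4 * π ^ 2 * ∑ i, ((k i : ℝ)) ^ 2
  have hW : 0 < W := by positivity
  have hle : ∀ i, 1 + 4 * π ^ 2 * (k i : ℝ) ^ 2 ≤ W := fun i => by
    have := Finset.single_le_sum (fun j _ => sq_nonneg (k j : ℝ)) (Finset.mem_univ i)
    simp only [W]
    gcongr
  calc jpW k ^ (-s) = ∏ _i : Fin n, W ^ (-(s / (2 * n))) := by
        rw [Finset.prod_const, Finset.card_univ, Fintype.card_fin, jpW, ← Real.rpow_mul hW.le,
          ← Real.rpow_mul_natCast hW.le]
        congr 1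
        field_simp
    _ ≤ ∏ i, (1 + 4 * π ^ 2 * (k i : ℝ) ^ 2) ^ (-(s / (2 * n))) :=
        Finset.prod_le_prod (fun _ _ => by positivity) fun i _ =>
          Real.rpow_le_rpow_of_nonpos (by positivity) (hle i) (by simp; positivity)

lemma jpW_nonneg {n : ℕ} (k : Fin n → ℤ) : 0 ≤ jpW k := by
  unfold jpW
  positivity

lemma summable_jpW_rpow_neg {n : ℕ} {s : ℝ} (hs : n < s) :
    Summable fun k : Fin n → ℤ => jpW k ^ (-s) := by
  rcases eq_or_ne n 0 with rfl | hn
  · exact .of_finite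
  have hn' : (0 : ℝ) < n := by positivity
  refine Summable.of_nonneg_of_le (fun k => Real.rpow_nonneg (jpW_nonneg k) _)
    (jpW_rpow_neg_le_prod hn (hn'.trans hs).le)
    (summable_pi_prod_of_nonneg (summable_int_one_add_mul_sq_rpow_neg (by positivity) ?_)
      (fun m => by positivity) n)
  rw [lt_div_iff₀ (by positivity)]
  linarith

section IntegralAgainstBounded

variable {α : Type*} [MeasurableSpace α] {μ : Measure α} [IsProbabilityMeasure μ]
  {p : ℝ≥0∞} [Fact (1 ≤ p)] {g : α → ℂ}

lemma norm_integral_mul_le_of_norm_le_one (f : Lp ℂ p μ) (hg : ∀ᵐ x ∂μ, ‖g x‖ ≤ 1) :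
    ‖∫ x, f x * g x ∂μ‖ ≤ ‖f‖ := by
  have hf := (Lp.memLp f).aestronglyMeasurable
  calc ‖∫ x, f x * g x ∂μ‖ ≤ ∫ x, ‖f x‖ ∂μ := by
        refine norm_integral_le_of_norm_le (Lp.memLp f |>.integrable Fact.out).norm ?_
        filter_upwards [hg] with x hx
        simpa [norm_mul] using mul_le_of_le_one_right (norm_nonneg (f x)) hx
    _ ≤ ‖f‖ := by
        rw [integral_norm_eq_lintegral_enorm hf, Lp.norm_def, ← eLpNorm_one_eq_lintegral_enorm]
        exact ENNReal.toReal_mono (Lp.eLpNorm_ne_top f)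
          (eLpNorm_le_eLpNorm_of_exponent_le Fact.out hf)

variable (p) in
def integralMulCLM (hgm : AEStronglyMeasurable g μ) (hg : ∀ᵐ x ∂μ, ‖g x‖ ≤ 1) :
    Lp ℂ p μ →L[ℂ] ℂ :=
  LinearMap.mkContinuous
    { toFun f := ∫ x, (f : α → ℂ) x * g x ∂μ
      map_add' f h := by
        have hint : ∀ f : Lp ℂ p μ, Integrable (fun x => (f : α → ℂ) x * g x) μ := fun f =>
          ((Lp.memLp f).integrable Fact.out).mul_bdd hgm hg
        rw [← integral_add (hint f) (hint h)]
        refine integral_congr_ae ?_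
        filter_upwards [Lp.coeFn_add f h] with x hx
        rw [hx, Pi.add_apply, add_mul]
      map_smul' c f := by
        rw [RingHom.id_apply, smul_eq_mul, ← integral_const_mul]
        refine integral_congr_ae ?_
        filter_upwards [Lp.coeFn_smul c f] with x hx
        rw [hx, Pi.smul_apply, smul_eq_mul, mul_assoc] }
    1 fun f => by simpa using norm_integral_mul_le_of_norm_le_one f hg

lemma norm_integralMulCLM_le (hgm : AEStronglyMeasurable g μ) (hg : ∀ᵐ x ∂μ, ‖g x‖ ≤ 1) :
    ‖integralMulCLM p hgm hg‖ ≤ 1 :=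
  LinearMap.mkContinuous_norm_le _ zero_le_one _

end IntegralAgainstBounded

lemma hasSum_tsum_smulRight_apply {𝕜 E F ι : Type*} [NontriviallyNormedField 𝕜]
    [NormedAddCommGroup E] [NormedSpace 𝕜 E] [NormedAddCommGroup F] [NormedSpace 𝕜 F]
    [CompleteSpace F] {φ : ι → StrongDual 𝕜 E} {y : ι → F}
    (h : Summable fun i => ‖φ i‖ * ‖y i‖) (v : E) :
    HasSum (fun i => φ i v • y i) ((∑' i, (φ i).smulRight (y i)) v) := by
  have hs : Summable fun i => (φ i).smulRight (y i) :=
    .of_norm (h.congr fun i => (ContinuousLinearMap.norm_smulRight_apply _ _).symm)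
  exact hs.hasSum.mapL (ContinuousLinearMap.apply 𝕜 F v)

lemma isRNuclear_of_hasSum {E F ι : Type*} [NormedAddCommGroup E] [NormedSpace ℂ E]
    [NormedAddCommGroup F] [NormedSpace ℂ F] [Countable ι] {r : ℝ} (hr : r ≠ 0) {T : E →L[ℂ] F}
    (φ : ι → StrongDual ℂ E) (y : ι → F) (hT : ∀ v, HasSum (fun i => φ i v • y i) (T v))
    (hs : Summable fun i => ‖φ i‖ ^ r * ‖y i‖ ^ r) : IsRNuclear r T := by
  have := Encodable.ofCountable ι
  have he : Function.Injective (Encodable.encode : ι → ℕ) := Encodable.encode_injective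
  refine ⟨Function.extend Encodable.encode φ 0, Function.extend Encodable.encode y 0,
    fun v => (he.hasSum_iff fun m hm => ?_).mp ?_, (he.summable_iff fun m hm => ?_).mp ?_⟩
  · simp [Function.extend_apply' _ _ _ hm]
  · simpa [Function.comp_def, he.extend_apply] using hT v
  · simp [Function.extend_apply' _ _ _ hm, Real.zero_rpow hr]
  · simpa [Function.comp_def, he.extend_apply] using hs

section Torus

variable {n : ℕ}

lemma continuous_eK (k : Fin n → ℤ) : Continuous (eK k) :=
  continuous_finsetProd _ fun i _ => (fourier (k i)).continuous.comp (continuous_apply i)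

lemma norm_eK (k : Fin n → ℤ) (x : Torus n) : ‖eK k x‖ = 1 := by
  simp [eK, fourier, Circle.norm_coe]

lemma memLp_mul_eK {p : ℝ≥0∞} (k : Fin n → ℤ) {a : Torus n → ℂ} {b : ℝ} (ha : Measurable a)
    (hab : ∀ x, ‖a x‖ ≤ b) :
    MemLp (fun x => a x * eK k x) p volume :=
  .of_bound (ha.mul (continuous_eK k).measurable).aestronglyMeasurable b
    (ae_of_all _ fun x => by simpa [norm_eK] using hab x)

variable (p : ℝ≥0∞) [Fact (1 ≤ p)]

def fourierCoeffCLM (k : Fin n → ℤ) : Lp ℂ p (volume : Measure (Torus n)) →L[ℂ] ℂ :=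
  integralMulCLM p (g := fun x => starRingEnd ℂ (eK k x))
    (continuous_eK k).star.aestronglyMeasurable (ae_of_all _ fun x => by simp [norm_eK])

lemma fourierCoeffCLM_apply (k : Fin n → ℤ) (f : Lp ℂ p (volume : Measure (Torus n))) :
    fourierCoeffCLM p k f = fourierCoeffT f k :=
  rfl

lemma norm_fourierCoeffCLM_le (k : Fin n → ℤ) : ‖fourierCoeffCLM p k‖ ≤ 1 :=
  norm_integralMulCLM_le _ _

end Torus

section Symbol

variable {n : ℕ} {σ : Torus n → (Fin n → ℤ) → ℂ} {β : (Fin n → ℤ) → ℝ}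
  {p₁ p₂ : ℝ≥0∞} [Fact (1 ≤ p₁)]

lemma norm_le_of_coeFn_ae_eq_mul_eK {k : Fin n → ℤ} {a : Torus n → ℂ} {b : ℝ}
    (hab : ∀ x, ‖a x‖ ≤ b) {G : Lp ℂ p₂ (volume : Measure (Torus n))}
    (hG : G =ᵐ[volume] fun x => a x * eK k x) : ‖G‖ ≤ b := by
  simpa [measureUnivNNReal] using Lp.norm_le_of_ae_bound (f := G) ((norm_nonneg _).trans (hab 0))
    (hG.mono fun x hx => by rw [hx, norm_mul, norm_eK, mul_one]; exact hab x)

variable [Fact (1 ≤ p₂)]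

lemma summable_norm_fourierCoeffCLM_rpow_mul (hσ : ∀ x k, ‖σ x k‖ ≤ β k) {q : ℝ} (hq : 0 ≤ q)
    (hβ : Summable fun k => β k ^ q) {F : (Fin n → ℤ) → Lp ℂ p₂ (volume : Measure (Torus n))}
    (hF : ∀ k, F k =ᵐ[volume] fun x => σ x k * eK k x) :
    Summable fun k => ‖fourierCoeffCLM p₁ k‖ ^ q * ‖F k‖ ^ q := by
  refine hβ.of_nonneg_of_le (fun k => by positivity) fun k => ?_
  have hφ := Real.rpow_le_one (norm_nonneg _) (norm_fourierCoeffCLM_le p₁ k) hq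
  have hFk := Real.rpow_le_rpow (norm_nonneg _) (norm_le_of_coeFn_ae_eq_mul_eK (hσ · k) (hF k)) hq
  exact (mul_le_mul hφ hFk (by positivity) zero_le_one).trans_eq (one_mul _)

variable (hσ : ∀ x k, ‖σ x k‖ ≤ β k)
include hσ

lemma exists_isOp (hmeas : ∀ k, Measurable (fun x => σ x k)) (hβ : Summable β) :
    ∃ A : Lp ℂ p₁ (volume : Measure (Torus n)) →L[ℂ] Lp ℂ p₂ (volume : Measure (Torus n)),
      IsOp σ A := by
  let F : (Fin n → ℤ) → Lp ℂ p₂ (volume : Measure (Torus n)) := fun k =>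
    (memLp_mul_eK k (hmeas k) (hσ · k)).toLp
  have hF : ∀ k, F k =ᵐ[volume] fun x => σ x k * eK k x := fun k => MemLp.coeFn_toLp _
  have hsum : Summable fun k => ‖fourierCoeffCLM p₁ k‖ * ‖F k‖ := by
    simpa using summable_norm_fourierCoeffCLM_rpow_mul hσ zero_le_one (by simpa using hβ) hF
  refine ⟨∑' k, (fourierCoeffCLM p₁ k).smulRight (F k), F, hF, fun f => ?_⟩
  simpa only [fourierCoeffCLM_apply] using hasSum_tsum_smulRight_apply hsum f

lemma IsOp.isRNuclear
    {A : Lp ℂ p₁ (volume : Measure (Torus n)) →L[ℂ] Lp ℂ p₂ (volume : Measure (Torus n))}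
    (hA : IsOp σ A) {r : ℝ} (hr : 0 < r) (hβ : Summable fun k => β k ^ r) : IsRNuclear r A := by
  obtain ⟨F, hF, hAF⟩ := hA
  refine isRNuclear_of_hasSum hr.ne' (fourierCoeffCLM p₁) F (fun f => ?_)
    (summable_norm_fourierCoeffCLM_rpow_mul hσ hr.le hβ hF)
  simpa only [fourierCoeffCLM_apply] using hAF f

end Symbol

theorem op_symbol_pointwise_decay_rNuclear_general (n : ℕ)
    (p₁ p₂ : ℝ≥0∞) [Fact (1 ≤ p₁)] [Fact (1 ≤ p₂)]
    (r : ℝ) (hr0 : 0 < r) (hr1 : r ≤ 1)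
    (σ : Torus n → (Fin n → ℤ) → ℂ)
    (hmeas : ∀ k, Measurable (fun x => σ x k))
    (C : ℝ) (hC : 0 < C) (s : ℝ) (hs : (n : ℝ) < s)
    (hdecay : ∀ (x : Torus n) (k : Fin n → ℤ), ‖σ x k‖ ≤ C * jpW k ^ (-(s / r))) :
    (∃ A : Lp ℂ p₁ (volume : Measure (Torus n)) →L[ℂ]
          Lp ℂ p₂ (volume : Measure (Torus n)), IsOp σ A) ∧
    ∀ A : Lp ℂ p₁ (volume : Measure (Torus n)) →L[ℂ]
          Lp ℂ p₂ (volume : Measure (Torus n)),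
      IsOp σ A → IsRNuclear r A := by
  have hsr : (n : ℝ) < s / r := hs.trans_le (le_div_self (by linarith) hr0 hr1)
  have hsummable : Summable fun k : Fin n → ℤ => C * jpW k ^ (-(s / r)) :=
    (summable_jpW_rpow_neg hsr).mul_left C
  have hsummable_rpow : Summable fun k : Fin n → ℤ => (C * jpW k ^ (-(s / r))) ^ r := by
    refine ((summable_jpW_rpow_neg hs).mul_left (C ^ r)).congr fun k => ?_
    rw [Real.mul_rpow hC.le (Real.rpow_nonneg (jpW_nonneg k) _), ← Real.rpow_mul (jpW_nonneg k),
      neg_mul, div_mul_cancel₀ s hr0.ne']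
  exact ⟨exists_isOp hdecay hmeas hsummable,
    fun A hA => hA.isRNuclear hdecay hr0 hsummable_rpow⟩

/-- **`r`-nuclearity from a pointwise decay estimate on the symbol.** Let `1 ≤ p₁, p₂ < ∞`,
`0 < r ≤ 1`, and `σ : 𝕋ⁿ × ℤⁿ → ℂ` with `σ(·,k)` measurable and
`|σ(x,k)| ≤ C ⟨k⟩^{-s/r}` for all `x, k`, for some `C > 0`, `s > n`. Then `Op(σ)` is a
well-defined bounded operator from `L^{p₁}(μ)` to `L^{p₂}(μ)` and is `r`-nuclear. -/
theorem op_symbol_pointwise_decay_rNuclear (n : ℕ) (hn : 1 ≤ n)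
    (p₁ p₂ : ℝ≥0∞) [Fact (1 ≤ p₁)] [Fact (1 ≤ p₂)] (hp₁ : p₁ ≠ ∞) (hp₂ : p₂ ≠ ∞)
    (r : ℝ) (hr0 : 0 < r) (hr1 : r ≤ 1)
    (σ : Torus n → (Fin n → ℤ) → ℂ)
    (hmeas : ∀ k, Measurable (fun x => σ x k))
    (C : ℝ) (hC : 0 < C) (s : ℝ) (hs : (n : ℝ) < s)
    (hdecay : ∀ (x : Torus n) (k : Fin n → ℤ), ‖σ x k‖ ≤ C * jpW k ^ (-(s / r))) :
    (∃ A : Lp ℂ p₁ (volume : Measure (Torus n)) →L[ℂ]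
          Lp ℂ p₂ (volume : Measure (Torus n)), IsOp σ A) ∧
    ∀ A : Lp ℂ p₁ (volume : Measure (Torus n)) →L[ℂ]
          Lp ℂ p₂ (volume : Measure (Torus n)),
      IsOp σ A → IsRNuclear r A :=
  op_symbol_pointwise_decay_rNuclear_general n p₁ p₂ r hr0 hr1 σ hmeas C hC s hs hdecay
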